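/- Let F be a finitely supported sequence in the open unit disc and (a, b) its nonlinear Fourier transform. Then the normalized integral over the unit circle of log|a| equals −(1/2)·∑_n log(1 − |F_n|^2) (the nonlinear Plancherel identity). -/

import Mathlib

/-- The transfer matrix `T_n(z) = (1−|F_n|²)^{-1/2}·[[1, F_n zⁿ],[conj(F_n) z⁻ⁿ, 1]]`. -/
noncomputable def transfer (F : ℤ → ℂ) (z : ℂ) (n : ℤ) : Matrix (Fin 2) (Fin 2) ℂ :=
  (((Real.sqrt (1 - ‖F n‖ ^ 2))⁻¹ : ℝ) : ℂ) •
    !![1, F n * z ^ n; (starRingEnd ℂ) (F n) * z ^ (-n), 1]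

/-- The nonlinear Fourier transform matrix (ordered product over `s`). -/
noncomputable def nlft (F : ℤ → ℂ) (s : Finset ℤ) (z : ℂ) : Matrix (Fin 2) (Fin 2) ℂ :=
  ((s.sort (· ≤ ·)).map (transfer F z)).prod

/-!
On the unit circle the transfer matrices lie in `SU(1,1)`, so `|a|² = 1 + |b|²` there. In the
variable `w = z⁻¹` the entry `a` is a polynomial `P` with `P 0 = ∏ (1 - |F_n|²)^{-1/2}`. Adding
the factors one at a time in increasing order of `n`, the maximum modulus principle shows
`|z⁻ⁿ b(z)| ≤ |a(z)|` for `|z| ≥ 1`, so the new entry `(1 - |F_n|²)^{-1/2} (a + conj(F_n) z⁻ⁿ b)`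
does not vanish there either. Hence `P` has no zeros on the closed disc, `log |P|` is harmonic
near it, and its mean over the circle is `log (P 0) = -(1/2) ∑ log (1 - |F_n|²)`.
-/

open Complex ComplexConjugate Polynomial Metric

noncomputable def transferScale (F : ℤ → ℂ) (n : ℤ) : ℝ :=
  (Real.sqrt (1 - ‖F n‖ ^ 2))⁻¹

noncomputable def transferProd (F : ℤ → ℂ) (l : List ℤ) (z : ℂ) : Matrix (Fin 2) (Fin 2) ℂ :=
  (l.map (transfer F z)).prod

section Transfer

variable (F : ℤ → ℂ)

lemma transferScale_pos {n : ℤ} (h : ‖F n‖ < 1) : 0 < transferScale F n := by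
  have : ‖F n‖ ^ 2 < 1 := pow_lt_one₀ (norm_nonneg _) h two_ne_zero
  exact inv_pos.2 (Real.sqrt_pos.2 (by linarith))

lemma transferScale_sq_mul {n : ℤ} (h : ‖F n‖ < 1) :
    transferScale F n ^ 2 * (1 - ‖F n‖ ^ 2) = 1 := by
  have : ‖F n‖ ^ 2 < 1 := pow_lt_one₀ (norm_nonneg _) h two_ne_zero
  rw [transferScale, inv_pow, Real.sq_sqrt (by linarith), inv_mul_cancel₀ (by linarith)]

lemma log_transferScale {n : ℤ} (h : ‖F n‖ ≤ 1) :
    Real.log (transferScale F n) = -(1 / 2) * Real.log (1 - ‖F n‖ ^ 2) := by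
  have : ‖F n‖ ^ 2 ≤ 1 := pow_le_one₀ (norm_nonneg _) h
  rw [transferScale, Real.log_inv, Real.log_sqrt (by linarith)]
  ring

@[simp] lemma transfer_apply_zero_zero (z : ℂ) (n : ℤ) :
    transfer F z n 0 0 = transferScale F n := by
  simp [transfer, transferScale]

@[simp] lemma transfer_apply_zero_one (z : ℂ) (n : ℤ) :
    transfer F z n 0 1 = transferScale F n * (F n * z ^ n) := by
  simp [transfer, transferScale]

@[simp] lemma transfer_apply_one_zero (z : ℂ) (n : ℤ) :
    transfer F z n 1 0 = transferScale F n * (conj (F n) * z ^ (-n)) := by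
  simp [transfer, transferScale]

@[simp] lemma transfer_apply_one_one (z : ℂ) (n : ℤ) :
    transfer F z n 1 1 = transferScale F n := by
  simp [transfer, transferScale]

lemma det_transfer {z : ℂ} (hz : z ≠ 0) {n : ℤ} (h : ‖F n‖ < 1) : (transfer F z n).det = 1 := by
  have hscale : (transferScale F n : ℂ) ^ 2 * (1 - (‖F n‖ : ℂ) ^ 2) = 1 := by
    exact_mod_cast transferScale_sq_mul F h
  have hzpow : z ^ n * z ^ (-n) = 1 := by rw [← zpow_add₀ hz, add_neg_cancel, zpow_zero]
  rw [Matrix.det_fin_two]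
  simp only [transfer_apply_zero_zero, transfer_apply_zero_one, transfer_apply_one_zero,
    transfer_apply_one_one]
  linear_combination hscale - (transferScale F n : ℂ) ^ 2 * (‖F n‖ : ℂ) ^ 2 * hzpow
    - (transferScale F n : ℂ) ^ 2 * z ^ n * z ^ (-n) * mul_conj' (F n)

end Transfer

section TransferProd

variable (F : ℤ → ℂ)

@[simp] lemma transferProd_nil (z : ℂ) : transferProd F [] z = 1 := rfl

lemma transferProd_append_singleton (l : List ℤ) (n : ℤ) (z : ℂ) :
    transferProd F (l ++ [n]) z = transferProd F l z * transfer F z n := by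
  simp [transferProd]

lemma det_transferProd {l : List ℤ} (hF : ∀ n ∈ l, ‖F n‖ < 1) {z : ℂ} (hz : z ≠ 0) :
    (transferProd F l z).det = 1 := by
  induction l with
  | nil => simp
  | cons n l ih =>
    simp only [List.forall_mem_cons] at hF
    rw [transferProd, List.map_cons, List.prod_cons, Matrix.det_mul, det_transfer F hz hF.1,
      one_mul]
    exact ih hF.2

lemma transferProd_row_one_eq_conj {z : ℂ} (hz : ‖z‖ = 1) (l : List ℤ) :
    transferProd F l z 1 1 = conj (transferProd F l z 0 0) ∧
      transferProd F l z 1 0 = conj (transferProd F l z 0 1) := by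
  have hconj (n : ℤ) : conj (z ^ n) = z ^ (-n) := by
    rw [map_zpow₀, ← inv_eq_conj hz, inv_zpow, zpow_neg]
  induction l with
  | nil => simp
  | cons n l ih =>
    simp only [transferProd, List.map_cons, List.prod_cons] at ih ⊢
    simp only [Matrix.mul_apply, Fin.sum_univ_two, transfer_apply_zero_zero,
      transfer_apply_zero_one, transfer_apply_one_zero, transfer_apply_one_one, ih.1, ih.2,
      map_add, map_mul, hconj, conj_conj, conj_ofReal]
    constructor <;> ring

lemma norm_sq_transferProd_apply_zero_zero {l : List ℤ} (hF : ∀ n ∈ l, ‖F n‖ < 1) {z : ℂ}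
    (hz : ‖z‖ = 1) :
    ‖transferProd F l z 0 0‖ ^ 2 = 1 + ‖transferProd F l z 0 1‖ ^ 2 := by
  have hdet := det_transferProd F hF (norm_pos_iff.1 (hz ▸ one_pos))
  obtain ⟨h11, h10⟩ := transferProd_row_one_eq_conj F hz l
  rw [Matrix.det_fin_two, h11, h10, mul_conj', mul_conj'] at hdet
  exact_mod_cast (by linear_combination hdet : (‖transferProd F l z 0 0‖ : ℂ) ^ 2
    = 1 + ‖transferProd F l z 0 1‖ ^ 2)

end TransferProd

lemma zpow_mul_inv_pow {z : ℂ} (hz : z ≠ 0) (N : ℤ) (k : ℕ) : z ^ N * z⁻¹ ^ k = z ^ (N - k) := by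
  rw [inv_pow, ← zpow_natCast, ← zpow_neg, ← zpow_add₀ hz, sub_eq_add_neg]

theorem exists_polynomial_transferProd (F : ℤ → ℂ) {l : List ℤ} (hl : l.Pairwise (· < ·))
    {N : ℤ} (hN : ∀ m ∈ l, m ≤ N) :
    ∃ P Q : ℂ[X], P.eval 0 = ((l.map (transferScale F)).prod : ℝ) ∧
      ∀ z ≠ 0, transferProd F l z 0 0 = P.eval z⁻¹ ∧
        transferProd F l z 0 1 = z ^ N * Q.eval z⁻¹ := by
  induction l using List.reverseRecOn generalizing N with
  | nil => exact ⟨1, 0, by simp, fun z _ => by simp⟩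
  | append_singleton l n ih =>
    obtain ⟨hl, -, hlt⟩ := List.pairwise_append.1 hl
    have hnN : n ≤ N := hN n (by simp)
    obtain ⟨P, Q, hP0, hPQ⟩ :=
      ih hl (N := n - 1) fun m hm => Int.le_sub_one_of_lt (hlt m hm n (by simp))
    set c : ℂ := (transferScale F n : ℂ)
    refine ⟨C c * (P + C (conj (F n)) * X * Q),
      C c * (C (F n) * X ^ (N - n).toNat * P + X ^ (N - n + 1).toNat * Q), ?_, fun z hz => ?_⟩
    · simp only [eval_mul, eval_C, eval_add, hP0, eval_X, mul_zero, zero_mul, add_zero,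
        List.map_append, List.map_cons, List.map_nil, List.prod_append, List.prod_cons,
        List.prod_nil, mul_one, ofReal_mul, c]
      ring
    obtain ⟨ha, hb⟩ := hPQ z hz
    have hn : z ^ N * z⁻¹ ^ (N - n).toNat = z ^ n := by
      rw [zpow_mul_inv_pow hz, Int.toNat_of_nonneg (by omega), sub_sub_cancel]
    have hn1 : z ^ N * z⁻¹ ^ (N - n + 1).toNat = z ^ (n - 1) := by
      rw [zpow_mul_inv_pow hz, Int.toNat_of_nonneg (by omega)]; ring_nf
    have hshift : z ^ (n - 1) * z ^ (-n) = z⁻¹ := by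
      rw [← zpow_add₀ hz, ← zpow_neg_one]; ring_nf
    simp only [transferProd_append_singleton, Matrix.mul_apply, Fin.sum_univ_two,
      transfer_apply_zero_zero, transfer_apply_zero_one, transfer_apply_one_zero,
      transfer_apply_one_one, ha, hb, eval_mul, eval_add, eval_C, eval_pow, eval_X]
    constructor
    · linear_combination c * conj (F n) * Q.eval z⁻¹ * hshift
    · linear_combination -(c * F n * P.eval z⁻¹) * hn - c * Q.eval z⁻¹ * hn1

theorem Complex.norm_le_norm_of_forall_mem_frontier {E : Type*} [NormedAddCommGroup E]
    [NormedSpace ℂ E] [Nontrivial E] {f g : E → ℂ} {U : Set E} (hU : Bornology.IsBounded U)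
    (hf : DiffContOnCl ℂ f U) (hg : DiffContOnCl ℂ g U) (hg0 : ∀ z ∈ closure U, g z ≠ 0)
    (hfg : ∀ z ∈ frontier U, ‖f z‖ ≤ ‖g z‖) {z : E} (hz : z ∈ closure U) : ‖f z‖ ≤ ‖g z‖ := by
  have hratio : ‖(g z)⁻¹ • f z‖ ≤ 1 := by
    refine Complex.norm_le_of_forall_mem_frontier_norm_le hU ((hg.inv hg0).smul hf) ?_ hz
    intro w hw
    have hgw : 0 < ‖g w‖ := norm_pos_iff.2 (hg0 w (frontier_subset_closure hw))
    simpa [norm_smul, inv_mul_le_one₀ hgw] using hfg w hw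
  have hgz : 0 < ‖g z‖ := norm_pos_iff.2 (hg0 z hz)
  rwa [norm_smul, norm_inv, inv_mul_le_one₀ hgz] at hratio

section Nonvanishing

variable (F : ℤ → ℂ)

lemma eval_ne_zero_of_transferProd_ne_zero {l : List ℤ} (hF : ∀ n ∈ l, ‖F n‖ < 1) {P : ℂ[X]}
    (hP0 : P.eval 0 = ((l.map (transferScale F)).prod : ℝ))
    (hPa : ∀ z ≠ 0, transferProd F l z 0 0 = P.eval z⁻¹)
    (ha : ∀ z : ℂ, 1 ≤ ‖z‖ → transferProd F l z 0 0 ≠ 0) {w : ℂ} (hw : ‖w‖ ≤ 1) :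
    P.eval w ≠ 0 := by
  rcases eq_or_ne w 0 with rfl | hw0
  · rw [hP0, ofReal_ne_zero]
    exact (List.prod_pos fun x hx => by
      obtain ⟨n, hn, rfl⟩ := List.mem_map.1 hx
      exact transferScale_pos F (hF n hn)).ne'
  · have h1 : 1 ≤ ‖w⁻¹‖ := by rw [norm_inv]; exact one_le_inv₀ (norm_pos_iff.2 hw0) |>.2 hw
    simpa [hPa w⁻¹ (inv_ne_zero hw0)] using ha w⁻¹ h1

/-- On the circle this is `|a|² = 1 + |b|²`; outside it follows from the maximum modulus principle
for `w * Q w / P w`, where `w = z⁻¹`. -/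
lemma norm_zpow_mul_transferProd_le {l : List ℤ} (hl : l.Pairwise (· < ·))
    (hF : ∀ n ∈ l, ‖F n‖ < 1) (ha : ∀ z : ℂ, 1 ≤ ‖z‖ → transferProd F l z 0 0 ≠ 0)
    {n : ℤ} (hn : ∀ m ∈ l, m < n) {z : ℂ} (hz : 1 ≤ ‖z‖) :
    ‖z ^ (-n) * transferProd F l z 0 1‖ ≤ ‖transferProd F l z 0 0‖ := by
  obtain ⟨P, Q, hP0, hPQ⟩ := exists_polynomial_transferProd F hl (N := n - 1)
    fun m hm => Int.le_sub_one_of_lt (hn m hm)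
  have hz0 : z ≠ 0 := norm_pos_iff.1 (one_pos.trans_le hz)
  have hzb (z : ℂ) (hz : z ≠ 0) : z ^ (-n) * transferProd F l z 0 1 = z⁻¹ * Q.eval z⁻¹ := by
    rw [(hPQ z hz).2, ← mul_assoc, ← zpow_add₀ hz, ← zpow_neg_one]; ring_nf
  have hPne : ∀ w ∈ closure (ball (0 : ℂ) 1), P.eval w ≠ 0 := fun w hw =>
    eval_ne_zero_of_transferProd_ne_zero F hF hP0 (fun z hz => (hPQ z hz).1) ha
      (by simpa [closure_ball] using hw)
  rw [hzb z hz0, (hPQ z hz0).1]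
  refine norm_le_norm_of_forall_mem_frontier (f := fun w => w * Q.eval w) isBounded_ball
    (Differentiable.diffContOnCl (by fun_prop)) (P.differentiable.diffContOnCl) hPne ?_
    (by rw [closure_ball _ one_ne_zero, mem_closedBall_zero_iff, norm_inv]
        exact inv_le_one_of_one_le₀ hz)
  intro w hw
  rw [frontier_ball (0 : ℂ) one_ne_zero, mem_sphere_zero_iff_norm] at hw
  have hw0 : w ≠ 0 := norm_ne_zero_iff.1 (hw ▸ one_ne_zero)
  have hcircle := norm_sq_transferProd_apply_zero_zero F hF (z := w⁻¹) (by simp [hw])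
  rw [(hPQ w⁻¹ (inv_ne_zero hw0)).1, (hPQ w⁻¹ (inv_ne_zero hw0)).2, inv_inv] at hcircle
  simp only [norm_mul, norm_zpow, norm_inv, hw, inv_one, one_zpow, one_mul] at hcircle ⊢
  nlinarith [norm_nonneg (Q.eval w), norm_nonneg (P.eval w)]

theorem transferProd_apply_zero_zero_ne_zero {l : List ℤ} (hl : l.Pairwise (· < ·))
    (hF : ∀ n ∈ l, ‖F n‖ < 1) {z : ℂ} (hz : 1 ≤ ‖z‖) : transferProd F l z 0 0 ≠ 0 := by
  induction l using List.reverseRecOn generalizing z with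
  | nil => simp
  | append_singleton l n ih =>
    obtain ⟨hl, -, hlt⟩ := List.pairwise_append.1 hl
    have hFl : ∀ m ∈ l, ‖F m‖ < 1 := fun m hm => hF m (by simp [hm])
    have hFn : ‖F n‖ < 1 := hF n (by simp)
    have ha : transferProd F l z 0 0 ≠ 0 := ih hl hFl hz
    have hbound := norm_zpow_mul_transferProd_le F hl hFl (fun z hz => ih hl hFl hz)
      (fun m hm => hlt m hm n (by simp)) hz
    have hsmall :
        ‖conj (F n) * (z ^ (-n) * transferProd F l z 0 1)‖ < ‖transferProd F l z 0 0‖ := by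
      rw [norm_mul, norm_conj]
      calc ‖F n‖ * _ ≤ ‖F n‖ * ‖transferProd F l z 0 0‖ := by gcongr
        _ < ‖transferProd F l z 0 0‖ := mul_lt_of_lt_one_left (norm_pos_iff.2 ha) hFn
    have hsum : transferProd F (l ++ [n]) z 0 0 = transferScale F n *
        (transferProd F l z 0 0 + conj (F n) * (z ^ (-n) * transferProd F l z 0 1)) := by
      simp only [transferProd_append_singleton, Matrix.mul_apply, Fin.sum_univ_two,
        transfer_apply_zero_zero, transfer_apply_one_zero]
      ring
    rw [hsum]
    refine mul_ne_zero (ofReal_ne_zero.2 (transferScale_pos F hFn).ne') fun h => ?_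
    rw [add_eq_zero_iff_eq_neg'.1 h, norm_neg] at hsmall
    exact lt_irrefl _ hsmall

end Nonvanishing

theorem exists_polynomial_transferProd_apply_zero_zero (F : ℤ → ℂ) {l : List ℤ}
    (hl : l.Pairwise (· < ·)) (hF : ∀ n ∈ l, ‖F n‖ < 1) :
    ∃ P : ℂ[X], P.eval 0 = ((l.map (transferScale F)).prod : ℝ) ∧
      (∀ z ≠ 0, transferProd F l z 0 0 = P.eval z⁻¹) ∧ ∀ w : ℂ, ‖w‖ ≤ 1 → P.eval w ≠ 0 := by
  obtain ⟨N, hN⟩ := l.finite_toSet.bddAbove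
  obtain ⟨P, _, hP0, hPQ⟩ := exists_polynomial_transferProd F hl (N := N) fun m hm => hN hm
  have hPa (z : ℂ) (hz : z ≠ 0) := (hPQ z hz).1
  exact ⟨P, hP0, hPa, fun w => eval_ne_zero_of_transferProd_ne_zero F hF hP0 hPa
    fun z => transferProd_apply_zero_zero_ne_zero F hl hF⟩

lemma circleAverage_log_norm_eval_inv {P : ℂ[X]} (hP : ∀ w : ℂ, ‖w‖ ≤ 1 → P.eval w ≠ 0) :
    Real.circleAverage (fun z => Real.log ‖P.eval z⁻¹‖) 0 1 = Real.log ‖P.eval 0‖ := by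
  rw [Real.circleAverage_zero_one_congr_inv (f := fun z => Real.log ‖P.eval z‖)]
  exact AnalyticOnNhd.circleAverage_log_norm_of_ne_zero
    ((AnalyticOnNhd.eval_polynomial P).mono (Set.subset_univ _))
    fun w hw => hP w (by simpa using hw)

theorem nlft_plancherel_general (F : ℤ → ℂ) (s : Finset ℤ)
    (hF : ∀ n, ‖F n‖ < 1) :
    (1 / (2 * Real.pi)) * ∫ θ in (0:ℝ)..(2 * Real.pi),
        Real.log ‖nlft F s (Complex.exp (θ * Complex.I)) 0 0‖ =
      -(1 / 2) * ∑ n ∈ s, Real.log (1 - ‖F n‖ ^ 2) := by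
  obtain ⟨P, hP0, hPa, hPne⟩ := exists_polynomial_transferProd_apply_zero_zero F
    (Finset.sortedLT_sort s).pairwise fun n _ => hF n
  have hscale : ((s.sort (· ≤ ·)).map (transferScale F)).prod = ∏ n ∈ s, transferScale F n := by
    rw [Finset.prod_eq_multiset_prod, ← Finset.sort_eq s (· ≤ ·), Multiset.map_coe,
      Multiset.prod_coe]
  calc (1 / (2 * Real.pi)) * ∫ θ in (0:ℝ)..(2 * Real.pi),
        Real.log ‖nlft F s (Complex.exp (θ * Complex.I)) 0 0‖
      = Real.circleAverage (fun z => Real.log ‖P.eval z⁻¹‖) 0 1 := by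
        rw [Real.circleAverage_def, smul_eq_mul, one_div]
        congr 1
        refine intervalIntegral.integral_congr fun θ _ => ?_
        simp only [circleMap_zero, ofReal_one, one_mul, ← hPa _ (exp_ne_zero _)]
        rfl
    _ = Real.log ‖P.eval 0‖ := circleAverage_log_norm_eval_inv hPne
    _ = -(1 / 2) * ∑ n ∈ s, Real.log (1 - ‖F n‖ ^ 2) := by
        have hpos (n : ℤ) : 0 < transferScale F n := transferScale_pos F (hF n)
        rw [hP0, hscale, norm_real, Real.norm_of_nonneg (Finset.prod_nonneg fun n _ => (hpos n).le),
          Real.log_prod fun n _ => (hpos n).ne', Finset.mul_sum]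
        exact Finset.sum_congr rfl fun n _ => log_transferScale F (hF n).le

/-- The nonlinear Plancherel identity: the normalized integral over the unit circle of
`log|a|` equals `−(1/2)·∑_n log(1 − |F_n|²)`. -/
theorem nlft_plancherel (F : ℤ → ℂ) (s : Finset ℤ) (hsupp : ∀ n ∉ s, F n = 0)
    (hF : ∀ n, ‖F n‖ < 1) :
    (1 / (2 * Real.pi)) * ∫ θ in (0:ℝ)..(2 * Real.pi),
        Real.log ‖nlft F s (Complex.exp (θ * Complex.I)) 0 0‖ =
      -(1 / 2) * ∑ n ∈ s, Real.log (1 - ‖F n‖ ^ 2) :=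
  nlft_plancherel_general F s hF
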